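/- arXiv:1605.00302 — 2 statements merged into one kernel-verified Lean document; each statement's English description precedes it below -/
import Mathlib

section
/- The critical points of f(z,w) = z + w + w/z + 1/w on (ℂ*)^2, i.e. solutions of z - w/z = 0 and w + w/z - 1/w = 0, are in bijection with the roots of the polynomial p(z) = z^4 + z^3 - 1 via (z,w) ↦ z with inverse z ↦ (z, z^2). Moreover p has exactly 4 distinct complex roots (it is separable), so f has exactly 4 critical points. -/
/-!
The first critical-point equation forces `w = z ^ 2`; substituting into the second and clearing
denominators leaves `z * (z ^ 4 + z ^ 3 - 1) = 0`. Conversely every root of `z ^ 4 + z ^ 3 - 1`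
is nonzero and gives the critical point `(z, z ^ 2)`. The quartic is coprime to its derivative
(an explicit Bezout identity with constant `283`), so over `ℂ` it has exactly four distinct roots.
-/

open Polynomial

section

variable {K : Type*} [Field K]

theorem Polynomial.ncard_setOf_isRoot_of_separable [IsAlgClosed K] {p : K[X]}
    (hp : p.Separable) : {z : K | p.IsRoot z}.ncard = p.natDegree := by
  have hroots : {z : K | p.IsRoot z} = p.rootSet K := by
    ext z
    simp [mem_rootSet, hp.ne_zero]
  rw [hroots, Set.ncard_eq_toFinset_card', Set.toFinset_card,
    card_rootSet_eq_natDegree hp (IsAlgClosed.splits _)]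

variable (K) in
noncomputable def hirzebruchPoly : K[X] := X ^ 4 + X ^ 3 - 1

theorem isRoot_hirzebruchPoly {z : K} :
    (hirzebruchPoly K).IsRoot z ↔ z ^ 4 + z ^ 3 - 1 = 0 := by
  simp [hirzebruchPoly]

theorem natDegree_hirzebruchPoly : (hirzebruchPoly K).natDegree = 4 := by
  unfold hirzebruchPoly
  compute_degree!

theorem derivative_hirzebruchPoly :
    derivative (hirzebruchPoly K) = 4 * X ^ 3 + 3 * X ^ 2 := by
  simp [hirzebruchPoly, derivative_pow, map_ofNat]

-- `283 = -disc (X ^ 4 + X ^ 3 - 1)`; the cofactors come from the extended Euclidean algorithm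
-- applied to the polynomial and its derivative.
theorem separable_hirzebruchPoly (h283 : (283 : K) ≠ 0) : (hirzebruchPoly K).Separable := by
  have bezout : (48 * X ^ 2 - 283) * hirzebruchPoly K +
      (16 + 73 * X - 3 * X ^ 2 - 12 * X ^ 3) * derivative (hirzebruchPoly K) = C 283 := by
    rw [derivative_hirzebruchPoly, hirzebruchPoly, map_ofNat]
    ring
  have hinv : C (283 : K)⁻¹ * C 283 = 1 := by
    rw [← C_mul, inv_mul_cancel₀ h283, C_1]
  exact ⟨C (283 : K)⁻¹ * (48 * X ^ 2 - 283),
    C (283 : K)⁻¹ * (16 + 73 * X - 3 * X ^ 2 - 12 * X ^ 3),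
    by linear_combination C (283 : K)⁻¹ * bezout + hinv⟩

-- The equations are `z ∂f/∂z = 0` and `w ∂f/∂w = 0` for `f = z + w + w / z + 1 / w`.
def IsCriticalPoint (z w : K) : Prop :=
  z ≠ 0 ∧ w ≠ 0 ∧ z - w / z = 0 ∧ w + w / z - 1 / w = 0

theorem isCriticalPoint_iff {z w : K} :
    IsCriticalPoint z w ↔ z ^ 4 + z ^ 3 - 1 = 0 ∧ w = z ^ 2 := by
  constructor
  · rintro ⟨hz, hw, hdz, hdw⟩
    have hw2 : w = z ^ 2 := by
      field_simp at hdz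
      linear_combination -hdz
    subst hw2
    field_simp at hdw
    have hcleared : z * (z ^ 4 + z ^ 3 - 1) = 0 := by linear_combination z * hdw
    exact ⟨(mul_eq_zero.mp hcleared).resolve_left hz, rfl⟩
  · rintro ⟨hroot, rfl⟩
    have hz : z ≠ 0 := by
      rintro rfl
      norm_num at hroot
    refine ⟨hz, pow_ne_zero _ hz, ?_, ?_⟩
    · field_simp
      ring
    · field_simp
      linear_combination hroot

end

/-- critical points of the LG-potential of the Hirzebruch surface
`ℙ(O ⊕ O(1))` biject with the roots of `z^4 + z^3 - 1`, of which there are exactly 4. -/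
theorem stmt_2 :
    (∀ z w : ℂ, z ≠ 0 → w ≠ 0 → z - w / z = 0 → w + w / z - 1 / w = 0 →
      z ^ 4 + z ^ 3 - 1 = 0 ∧ w = z ^ 2) ∧
    (∀ z : ℂ, z ^ 4 + z ^ 3 - 1 = 0 →
      z ≠ 0 ∧ z ^ 2 ≠ 0 ∧ z - z ^ 2 / z = 0 ∧ z ^ 2 + z ^ 2 / z - 1 / z ^ 2 = 0) ∧
    Set.ncard {z : ℂ | z ^ 4 + z ^ 3 - 1 = 0} = 4 ∧
    Set.ncard {p : ℂ × ℂ | p.1 ≠ 0 ∧ p.2 ≠ 0 ∧ p.1 - p.2 / p.1 = 0 ∧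
      p.2 + p.2 / p.1 - 1 / p.2 = 0} = 4 := by
  have hroots : Set.ncard {z : ℂ | z ^ 4 + z ^ 3 - 1 = 0} = 4 := by
    simp_rw [← isRoot_hirzebruchPoly]
    rw [ncard_setOf_isRoot_of_separable (separable_hirzebruchPoly (by norm_num)),
      natDegree_hirzebruchPoly]
  have hcrit : {p : ℂ × ℂ | IsCriticalPoint p.1 p.2} =
      (fun z : ℂ => (z, z ^ 2)) '' {z : ℂ | z ^ 4 + z ^ 3 - 1 = 0} := by
    ext ⟨z, w⟩
    simp [isCriticalPoint_iff, eq_comm]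
  refine ⟨fun z w hz hw hdz hdw => isCriticalPoint_iff.1 ⟨hz, hw, hdz, hdw⟩,
    fun z hz => isCriticalPoint_iff.2 ⟨hz, rfl⟩, hroots, ?_⟩
  change Set.ncard {p : ℂ × ℂ | IsCriticalPoint p.1 p.2} = 4
  rw [hcrit, Set.ncard_image_of_injective _ (fun a b h => congrArg Prod.fst h), hroots]
end

section
/- Let n ≥ 2 and b ∈ ℤ. The set of solutions (z, w) ∈ (ℂ*)^2 of the system { -1/(z^{n-1} w^b) + i/(z^{n-1} w^{b+1}) = 0 , -b/(z^{n-1} w^b) + (b+1)i/(z^{n-1} w^{b+1}) - 1/w = 0 } is exactly { (z, i) : z^{n-1} = -i^{-(b+1)} }, and it has exactly n-1 elements. -/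
/-!
Clearing the common nonzero factor `X = z^(n-1) w^b`, the first equation reads `w = i`; with `w = i`
the second collapses to `1/X = 1/i`, i.e. `z^(n-1) i^b = i`. The solutions are therefore the
`(n-1)`-th roots of the nonzero number `-i^(-(b+1))`, of which there are exactly `n - 1` since `ℂ`
contains a primitive `(n-1)`-th root of unity.
-/

open Complex

section Field

variable {K : Type*} [Field K]

theorem neg_one_div_add_div_mul_eq_zero_iff {X w : K} (a : K) (hX : X ≠ 0) (hw : w ≠ 0) :
    -1 / X + a / (X * w) = 0 ↔ w = a := by
  rw [← sub_eq_zero, eq_comm]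
  field_simp
  constructor <;> intro h <;> linear_combination h

theorem neg_div_add_add_one_mul_div_sub_eq_zero_iff {X a : K} (c : K) (hX : X ≠ 0) (ha : a ≠ 0) :
    -c / X + (c + 1) * a / (X * a) - 1 / a = 0 ↔ X = a := by
  rw [mul_div_mul_right _ _ ha, ← sub_eq_zero (b := a)]
  field_simp
  constructor <;> intro h <;> linear_combination -h

theorem lg_limit_system_iff {X w a c : K} (hX : X ≠ 0) (hw : w ≠ 0) :
    (-1 / X + a / (X * w) = 0 ∧ -c / X + (c + 1) * a / (X * w) - 1 / w = 0) ↔ w = a ∧ X = a := by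
  rw [neg_one_div_add_div_mul_eq_zero_iff a hX hw]
  refine and_congr_right fun hwa => ?_
  subst hwa
  exact neg_div_add_add_one_mul_div_sub_eq_zero_iff c hX hw

end Field

theorem ncard_setOf_pow_eq {K : Type*} [Field K] [IsAlgClosed K] {ζ : K} {m : ℕ}
    (hζ : IsPrimitiveRoot ζ m) (hm : m ≠ 0) {c : K} (hc : c ≠ 0) :
    {z : K | z ^ m = c}.ncard = m := by
  classical
  rw [← Polynomial.nthRootsFinset_toSet (Nat.pos_of_ne_zero hm), Set.ncard_coe_finset,
    Polynomial.nthRootsFinset_def, Multiset.toFinset_card_of_nodup (hζ.nthRoots_nodup hc),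
    hζ.card_nthRoots, if_pos (IsAlgClosed.exists_pow_nat_eq c (Nat.pos_of_ne_zero hm))]

theorem Complex.mul_I_zpow_eq_I_iff {x : ℂ} (b : ℤ) : x * I ^ b = I ↔ x = -(I ^ (-(b + 1))) := by
  rw [zpow_neg, zpow_add_one₀ I_ne_zero, mul_inv, inv_I, mul_neg, neg_neg, inv_mul_eq_div,
    eq_div_iff (zpow_ne_zero b I_ne_zero)]

/-- the limiting branch of the LG-system of
`X_{n,b} = Bl_{ℙ^{n-2}}(ℙ(O ⊕ O(b)))` (Proposition 3.3.1): `w = i` and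
`z^{n-1} = -i^{-(b+1)}`, giving exactly `n-1` solutions. -/
theorem stmt_11 (n : ℕ) (hn : 2 ≤ n) (b : ℤ) :
    {p : ℂ × ℂ | p.1 ≠ 0 ∧ p.2 ≠ 0 ∧
        -1 / (p.1 ^ (n - 1) * p.2 ^ b) + Complex.I / (p.1 ^ (n - 1) * p.2 ^ (b + 1)) = 0 ∧
        -(b : ℂ) / (p.1 ^ (n - 1) * p.2 ^ b)
          + ((b : ℂ) + 1) * Complex.I / (p.1 ^ (n - 1) * p.2 ^ (b + 1)) - 1 / p.2 = 0}
      = {p : ℂ × ℂ | p.2 = Complex.I ∧ p.1 ^ (n - 1) = -(Complex.I ^ (-(b + 1)))} ∧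
    Set.ncard {p : ℂ × ℂ | p.2 = Complex.I ∧ p.1 ^ (n - 1) = -(Complex.I ^ (-(b + 1)))}
      = n - 1 := by
  have hm : n - 1 ≠ 0 := by omega
  have hc : -(I ^ (-(b + 1))) ≠ 0 := neg_ne_zero.2 (zpow_ne_zero _ I_ne_zero)
  constructor
  · ext ⟨z, w⟩
    constructor
    · rintro ⟨hz, hw, hsys⟩
      rw [zpow_add_one₀ hw, ← mul_assoc,
        lg_limit_system_iff (mul_ne_zero (pow_ne_zero _ hz) (zpow_ne_zero _ hw)) hw] at hsys
      obtain ⟨rfl, hX⟩ := hsys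
      exact ⟨rfl, (mul_I_zpow_eq_I_iff b).1 hX⟩
    · rintro ⟨rfl, hz⟩
      have hz0 : z ≠ 0 := by
        rintro rfl
        exact hc (by rw [← hz, zero_pow hm])
      refine ⟨hz0, I_ne_zero, ?_⟩
      rw [zpow_add_one₀ I_ne_zero, ← mul_assoc,
        lg_limit_system_iff (mul_ne_zero (pow_ne_zero _ hz0) (zpow_ne_zero _ I_ne_zero)) I_ne_zero]
      exact ⟨rfl, (mul_I_zpow_eq_I_iff b).2 hz⟩
  · have hprod : {p : ℂ × ℂ | p.2 = I ∧ p.1 ^ (n - 1) = -(I ^ (-(b + 1)))}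
        = {z : ℂ | z ^ (n - 1) = -(I ^ (-(b + 1)))} ×ˢ {I} :=
      Set.ext fun _ => and_comm
    rw [hprod, Set.ncard_prod, Set.ncard_singleton, mul_one]
    exact ncard_setOf_pow_eq (isPrimitiveRoot_exp _ hm) hm hc
end
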